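/- Let φ : ℂ → ℝ be C²-smooth. Then as differential operators acting on smooth compactly supported functions, (∂̄ - M_{∂̄φ})*(∂̄ - M_{∂̄φ}) - (∂ + M_{∂φ})*(∂ + M_{∂φ}) = 2 M_{Δ̂φ}, where M_F denotes multiplication by F, and adjoints are taken with respect to the L²(ℂ) inner product (so ∂* = -∂̄, ∂̄* = -∂, M_F* = M_{conj F}). -/

import Mathlib

open MeasureTheory Complex Real Filter Topology

/-- Wirtinger derivative ∂̄ = (∂ₓ + i ∂_y)/2. -/
noncomputable def dbar (f : ℂ → ℂ) (z : ℂ) : ℂ :=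
  (fderiv ℝ f z 1 + Complex.I * fderiv ℝ f z Complex.I) / 2

/-- Wirtinger derivative ∂ = (∂ₓ - i ∂_y)/2. -/
noncomputable def dee (f : ℂ → ℂ) (z : ℂ) : ℂ :=
  (fderiv ℝ f z 1 - Complex.I * fderiv ℝ f z Complex.I) / 2

/-- ∂̄ applied to a real-valued function (viewed as complex-valued). -/
noncomputable def dbarR (φ : ℂ → ℝ) (z : ℂ) : ℂ := dbar (fun w => (φ w : ℂ)) z

/-- ∂ applied to a real-valued function (viewed as complex-valued). -/
noncomputable def deeR (φ : ℂ → ℝ) (z : ℂ) : ℂ := dee (fun w => (φ w : ℂ)) z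

/-- Normalized Laplacian Δ̂ = (∂ₓ² + ∂_y²)/4. -/
noncomputable def lapHat (φ : ℂ → ℝ) (z : ℂ) : ℝ :=
  (fderiv ℝ (fun w => fderiv ℝ φ w 1) z 1 +
   fderiv ℝ (fun w => fderiv ℝ φ w Complex.I) z Complex.I) / 4

/-- `u` solves `∂̄ u = f` in the sense of distributions. -/
def IsDbarSol (u f : ℂ → ℂ) : Prop :=
  ∀ ψ : ℂ → ℂ, ContDiff ℝ (⊤ : ℕ∞) ψ → HasCompactSupport ψ →
    ∫ z : ℂ, f z * ψ z = -∫ z : ℂ, u z * dbar ψ z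

private lemma fderiv_ofReal_comp {φ : ℂ → ℝ} {z : ℂ} (h : DifferentiableAt ℝ φ z) (u : ℂ) :
    fderiv ℝ (fun w => (φ w : ℂ)) z u = (fderiv ℝ φ z u : ℂ) := by
  have h2 : HasFDerivAt (fun w => (φ w : ℂ)) (Complex.ofRealCLM.comp (fderiv ℝ φ z)) z :=
    Complex.ofRealCLM.hasFDerivAt.comp z h.hasFDerivAt
  rw [h2.fderiv]; rfl

private lemma fderiv_fderiv_apply {f : ℂ → ℂ} {z : ℂ}
    (h : DifferentiableAt ℝ (fderiv ℝ f) z) (u w : ℂ) :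
    fderiv ℝ (fun x => fderiv ℝ f x u) z w = fderiv ℝ (fderiv ℝ f) z w u := by
  have h2 : HasFDerivAt (fun x => fderiv ℝ f x u)
      ((ContinuousLinearMap.apply ℝ ℂ u).comp (fderiv ℝ (fderiv ℝ f) z)) z :=
    (ContinuousLinearMap.apply ℝ ℂ u).hasFDerivAt.comp z h.hasFDerivAt
  rw [h2.fderiv]; rfl

private lemma dee_sub' {f g : ℂ → ℂ} {z : ℂ} (hf : DifferentiableAt ℝ f z)
    (hg : DifferentiableAt ℝ g z) :
    dee (fun w => f w - g w) z = dee f z - dee g z := by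
  simp only [dee, fderiv_fun_sub hf hg, ContinuousLinearMap.sub_apply]; ring

private lemma dbar_add' {f g : ℂ → ℂ} {z : ℂ} (hf : DifferentiableAt ℝ f z)
    (hg : DifferentiableAt ℝ g z) :
    dbar (fun w => f w + g w) z = dbar f z + dbar g z := by
  simp only [dbar, fderiv_fun_add hf hg, ContinuousLinearMap.add_apply]; ring

private lemma dee_mul' {f g : ℂ → ℂ} {z : ℂ} (hf : DifferentiableAt ℝ f z)
    (hg : DifferentiableAt ℝ g z) :
    dee (fun w => f w * g w) z = dee f z * g z + f z * dee g z := by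
  simp only [dee, fderiv_fun_mul hf hg, ContinuousLinearMap.add_apply,
    ContinuousLinearMap.smul_apply, smul_eq_mul]; ring

private lemma dbar_mul' {f g : ℂ → ℂ} {z : ℂ} (hf : DifferentiableAt ℝ f z)
    (hg : DifferentiableAt ℝ g z) :
    dbar (fun w => f w * g w) z = dbar f z * g z + f z * dbar g z := by
  simp only [dbar, fderiv_fun_mul hf hg, ContinuousLinearMap.add_apply,
    ContinuousLinearMap.smul_apply, smul_eq_mul]; ring

private lemma fderiv_comb {F G : ℂ → ℂ} {z : ℂ} (c : ℂ) (hF : DifferentiableAt ℝ F z)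
    (hG : DifferentiableAt ℝ G z) (u : ℂ) :
    fderiv ℝ (fun w => (F w + c * G w) / 2) z u
      = (fderiv ℝ F z u + c * fderiv ℝ G z u) / 2 := by
  have h3 : HasFDerivAt (fun w => (F w + c * G w) / 2)
      ((2:ℂ)⁻¹ • (fderiv ℝ F z + c • fderiv ℝ G z)) z := by
    have := (hF.hasFDerivAt.add (hG.hasFDerivAt.const_smul c)).const_smul ((2:ℂ)⁻¹)
    have e : (fun w => (F w + c * G w) / 2) = (2:ℂ)⁻¹ • (F + c • G) := by
      funext w; simp only [Pi.smul_apply, Pi.add_apply, smul_eq_mul]; ring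
    rw [e]; exact this
  rw [h3.fderiv]
  simp only [ContinuousLinearMap.smul_apply, ContinuousLinearMap.add_apply,
    smul_eq_mul, div_eq_inv_mul]

private lemma Differentiable.half {f : ℂ → ℂ} (h : Differentiable ℝ f) :
    Differentiable ℝ (fun w => f w / 2) := by
  have e : (fun w => f w / 2) = fun w => (2:ℂ)⁻¹ • f w := by
    funext w; simp [div_eq_inv_mul, smul_eq_mul]
  rw [e]; exact h.const_smul (2:ℂ)⁻¹

/-- Operator identity `(∂̄ - M_{∂̄φ})*(∂̄ - M_{∂̄φ}) - (∂ + M_{∂φ})*(∂ + M_{∂φ}) = 2 M_{Δ̂φ}`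
on test functions, with the adjoints `(∂̄ - M_{∂̄φ})* = -∂ - M_{∂φ}` and
`(∂ + M_{∂φ})* = -∂̄ + M_{∂̄φ}` written out explicitly. -/
theorem stmt1 (φ : ℂ → ℝ) (hφ : ContDiff ℝ 2 φ)
    (v : ℂ → ℂ) (hv : ContDiff ℝ (⊤ : ℕ∞) v) (hvc : HasCompactSupport v) (z : ℂ) :
    (-(dee (fun w => dbar v w - v w * dbarR φ w) z)
        - deeR φ z * (dbar v z - v z * dbarR φ z))
      - (-(dbar (fun w => dee v w + v w * deeR φ w) z)
        + dbarR φ z * (dee v z + v z * deeR φ z))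
      = 2 * (lapHat φ z : ℂ) * v z := by
  -- differentiability facts
  have hvd : Differentiable ℝ v := hv.differentiable (by simp)
  have hv' : ContDiff ℝ (⊤ : ℕ∞) (fderiv ℝ v) := hv.fderiv_right (by simp)
  have hv'd : Differentiable ℝ (fderiv ℝ v) := hv'.differentiable (by simp)
  have hφd : Differentiable ℝ φ := hφ.differentiable (by norm_num)
  have hφ' : ContDiff ℝ 1 (fderiv ℝ φ) := hφ.fderiv_right (by norm_num)
  have hφ'd : Differentiable ℝ (fderiv ℝ φ) := hφ'.differentiable (by norm_num)
  have hdV : ∀ c : ℂ, Differentiable ℝ (fun w => fderiv ℝ v w c) :=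
    fun c w => (hv'd w).clm_apply (differentiableAt_const c)
  have hdP : ∀ c : ℂ, Differentiable ℝ (fun w => fderiv ℝ φ w c) :=
    fun c w => (hφ'd w).clm_apply (differentiableAt_const c)
  have hdPc : ∀ c : ℂ, Differentiable ℝ (fun w => ((fderiv ℝ φ w c : ℝ) : ℂ)) :=
    fun c w => Complex.ofRealCLM.differentiableAt.comp w (hdP c w)
  -- function identities
  have hbeq : dbarR φ = fun w =>
      (((fderiv ℝ φ w 1 : ℝ) : ℂ) + Complex.I * ((fderiv ℝ φ w Complex.I : ℝ) : ℂ)) / 2 := by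
    funext w
    simp only [dbarR, dbar, fderiv_ofReal_comp (hφd w)]
  have haeq : deeR φ = fun w =>
      (((fderiv ℝ φ w 1 : ℝ) : ℂ) + (-Complex.I) * ((fderiv ℝ φ w Complex.I : ℝ) : ℂ)) / 2 := by
    funext w
    simp only [deeR, dee, fderiv_ofReal_comp (hφd w)]
    ring
  have hbd : Differentiable ℝ (dbarR φ) := by
    rw [hbeq]
    exact ((hdPc 1).add ((differentiable_const Complex.I).mul (hdPc Complex.I))).half
  have had : Differentiable ℝ (deeR φ) := by
    rw [haeq]
    exact ((hdPc 1).add ((differentiable_const (-Complex.I)).mul (hdPc Complex.I))).half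
  have hdbarveq : dbar v = fun w =>
      (fderiv ℝ v w 1 + Complex.I * fderiv ℝ v w Complex.I) / 2 := rfl
  have hdeeveq : dee v = fun w =>
      (fderiv ℝ v w 1 + (-Complex.I) * fderiv ℝ v w Complex.I) / 2 := by
    funext w; simp only [dee]; ring
  have hdbarvd : Differentiable ℝ (dbar v) := by
    rw [hdbarveq]
    exact ((hdV 1).add ((differentiable_const Complex.I).mul (hdV Complex.I))).half
  have hdeevd : Differentiable ℝ (dee v) := by
    rw [hdeeveq]
    exact ((hdV 1).add ((differentiable_const (-Complex.I)).mul (hdV Complex.I))).half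
  -- second derivative abbreviations
  have fdv : ∀ u c : ℂ, fderiv ℝ (fun w => fderiv ℝ v w c) z u
      = fderiv ℝ (fderiv ℝ v) z u c := fun u c => fderiv_fderiv_apply (hv'd z) c u
  -- fderiv of dbar v and dee v
  have hfd_dbarv : ∀ u : ℂ, fderiv ℝ (dbar v) z u
      = (fderiv ℝ (fderiv ℝ v) z u 1 + Complex.I * fderiv ℝ (fderiv ℝ v) z u Complex.I) / 2 := by
    intro u
    rw [hdbarveq, fderiv_comb Complex.I (hdV 1 z) (hdV Complex.I z) u, fdv, fdv]
  have hfd_deev : ∀ u : ℂ, fderiv ℝ (dee v) z u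
      = (fderiv ℝ (fderiv ℝ v) z u 1 - Complex.I * fderiv ℝ (fderiv ℝ v) z u Complex.I) / 2 := by
    intro u
    rw [hdeeveq, fderiv_comb (-Complex.I) (hdV 1 z) (hdV Complex.I z) u, fdv, fdv]
    ring
  -- symmetry of second derivative of v
  have hsym : fderiv ℝ (fderiv ℝ v) z 1 Complex.I = fderiv ℝ (fderiv ℝ v) z Complex.I 1 :=
    (hv.contDiffAt.isSymmSndFDerivAt (by rw [minSmoothness_of_isRCLikeNormedField]; exact WithTop.coe_le_coe.mpr le_top)) 1 Complex.I
  -- key 1 : commutation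
  have key1 : dee (dbar v) z = dbar (dee v) z := by
    simp only [dee, dbar] at *
    rw [hfd_dbarv 1, hfd_dbarv Complex.I, hfd_deev 1, hfd_deev Complex.I]
    linear_combination (Complex.I / 2) * hsym
  -- fderiv of dbarR and deeR
  have hfd_b : ∀ u : ℂ, fderiv ℝ (dbarR φ) z u
      = ((fderiv ℝ (fun w => fderiv ℝ φ w 1) z u : ℝ)
        + Complex.I * (fderiv ℝ (fun w => fderiv ℝ φ w Complex.I) z u : ℝ)) / 2 := by
    intro u
    rw [hbeq, fderiv_comb Complex.I (hdPc 1 z) (hdPc Complex.I z) u,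
      fderiv_ofReal_comp (hdP 1 z), fderiv_ofReal_comp (hdP Complex.I z)]
  have hfd_a : ∀ u : ℂ, fderiv ℝ (deeR φ) z u
      = ((fderiv ℝ (fun w => fderiv ℝ φ w 1) z u : ℝ)
        - Complex.I * (fderiv ℝ (fun w => fderiv ℝ φ w Complex.I) z u : ℝ)) / 2 := by
    intro u
    rw [haeq, fderiv_comb (-Complex.I) (hdPc 1 z) (hdPc Complex.I z) u,
      fderiv_ofReal_comp (hdP 1 z), fderiv_ofReal_comp (hdP Complex.I z)]
    ring
  -- key 2
  have key2 : dee (dbarR φ) z + dbar (deeR φ) z = 2 * (lapHat φ z : ℂ) := by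
    simp only [dee, dbar, lapHat]
    rw [hfd_b 1, hfd_b Complex.I, hfd_a 1, hfd_a Complex.I]
    push_cast
    linear_combination
      (-(((fderiv ℝ (fun w => fderiv ℝ φ w Complex.I) z Complex.I : ℝ) : ℂ)) / 2) * Complex.I_sq
  -- expand the big expression
  have e1 : dee (fun w => dbar v w - v w * dbarR φ w) z
      = dee (dbar v) z - dee (fun w => v w * dbarR φ w) z :=
    dee_sub' (hdbarvd z) ((hvd z).mul (hbd z))
  have e2 : dee (fun w => v w * dbarR φ w) z
      = dee v z * dbarR φ z + v z * dee (dbarR φ) z := dee_mul' (hvd z) (hbd z)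
  have e3 : dbar (fun w => dee v w + v w * deeR φ w) z
      = dbar (dee v) z + dbar (fun w => v w * deeR φ w) z :=
    dbar_add' (hdeevd z) ((hvd z).mul (had z))
  have e4 : dbar (fun w => v w * deeR φ w) z
      = dbar v z * deeR φ z + v z * dbar (deeR φ) z := dbar_mul' (hvd z) (had z)
  rw [e1, e2, e3, e4]
  linear_combination (v z) * key2 - key1
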